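/- Let G be a graph whose edges have distinct weights, and let T be its unique minimum spanning forest. For two vertices x, y connected in G, let w∞ be the maximum weight of an edge on the unique path in T between x and y. If the filtration of G is obtained by adding edges in increasing weight order, then the first graph in the filtration in which x and y are connected is exactly the graph obtained right after adding the edge of weight w∞. -/

import Mathlib

open SimpleGraph

section Aux

set_option linter.unusedSectionVars false

variable {V : Type} [Fintype V] [DecidableEq V]

/-- Reachability transfers along a graph in which every edge's endpoints are reachable. -/
private lemma reach_of_forall_adj {H K : SimpleGraph V}
    (h : ∀ u v : V, H.Adj u v → K.Reachable u v) {x y : V} (r : H.Reachable x y) :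
    K.Reachable x y := by
  obtain ⟨q⟩ := r
  induction q with
  | nil => exact Reachable.refl _
  | cons h' _ ih => exact (h _ _ h').trans ih

/-- Every vertex reachable (in `H`) from a vertex on the `a`-side or `b`-side of the
deleted edge `s(a,b)` is itself on one of the two sides. -/
private lemma side_classify {H : SimpleGraph V} {a b : V} :
    ∀ {u v : V}, (H.Walk u v) →
      ((H.deleteEdges {s(a, b)}).Reachable a u ∨ (H.deleteEdges {s(a, b)}).Reachable b u) →
      ((H.deleteEdges {s(a, b)}).Reachable a v ∨ (H.deleteEdges {s(a, b)}).Reachable b v) := by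
  intro u v q
  induction q with
  | nil => exact id
  | @cons u u' v h' q ih =>
    intro hu
    apply ih
    by_cases he : s(u, u') = s(a, b)
    · rw [Sym2.eq_iff] at he
      rcases he with ⟨rfl, rfl⟩ | ⟨rfl, rfl⟩
      · exact Or.inr (Reachable.refl _)
      · exact Or.inl (Reachable.refl _)
    · have hadj : (H.deleteEdges {s(a, b)}).Adj u u' := by
        rw [deleteEdges_adj]
        exact ⟨h', by simpa using he⟩
      rcases hu with h1 | h1
      · exact Or.inl (h1.trans hadj.reachable)
      · exact Or.inr (h1.trans hadj.reachable)

/-- A path through the edge `s(a,b)` starts on one side and ends on the other. -/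
private lemma path_split {H : SimpleGraph V} {a b : V} :
    ∀ {u v : V} (q : H.Walk u v), q.IsPath → s(a, b) ∈ q.edges →
      ((H.deleteEdges {s(a, b)}).Reachable a u ∧ (H.deleteEdges {s(a, b)}).Reachable b v) ∨
      ((H.deleteEdges {s(a, b)}).Reachable b u ∧ (H.deleteEdges {s(a, b)}).Reachable a v) := by
  intro u v q
  induction q with
  | nil => intro _ h; simp at h
  | @cons u u' v h' q ih =>
    intro hq he
    rw [Walk.edges_cons, List.mem_cons] at he
    have hnodup : s(u, u') ∉ q.edges := by
      have := hq.isTrail.edges_nodup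
      rw [Walk.edges_cons] at this
      exact (List.nodup_cons.mp this).1
    rcases he with he | he
    · have hq' : s(a, b) ∉ q.edges := by rw [he]; exact hnodup
      have hr : (H.deleteEdges {s(a, b)}).Reachable u' v :=
        ⟨q.toDeleteEdges {s(a, b)} (by
          intro e heq
          simp only [Set.mem_singleton_iff]
          rintro rfl
          exact hq' heq)⟩
      rw [Sym2.eq_iff] at he
      rcases he with ⟨rfl, rfl⟩ | ⟨rfl, rfl⟩
      · exact Or.inl ⟨Reachable.refl _, hr⟩
      · exact Or.inr ⟨Reachable.refl _, hr⟩
    · have hadj : (H.deleteEdges {s(a, b)}).Adj u u' := by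
        rw [deleteEdges_adj]
        refine ⟨h', ?_⟩
        simp only [Set.mem_singleton_iff]
        intro hcon
        exact hnodup (hcon ▸ he)
      rcases ih hq.of_cons he with ⟨h1, h2⟩ | ⟨h1, h2⟩
      · exact Or.inl ⟨h1.trans hadj.symm.reachable, h2⟩
      · exact Or.inr ⟨h1.trans hadj.symm.reachable, h2⟩

/-- A walk from a vertex satisfying `P` to one not satisfying `P` has a crossing edge. -/
private lemma crossing {K : SimpleGraph V} (P : V → Prop) :
    ∀ {u v : V}, (K.Walk u v) → P u → ¬ P v →
      ∃ c d : V, K.Adj c d ∧ P c ∧ ¬ P d := by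
  intro u v q
  induction q with
  | nil => intro h1 h2; exact absurd h1 h2
  | @cons u u' v h' q ih =>
    intro h1 h2
    by_cases h3 : P u'
    · exact ih h3 h2
    · exact ⟨u, u', h', h1, h3⟩

/-- Core exchange argument: if `x` is on the `a`-side and `y` on the `b`-side of the
bridge `s(a,b)` of the minimum spanning forest, then there is no walk from `x` to `y`
using only edges of weight at most `k < w s(a,b)`. -/
private lemma mst_key (G : SimpleGraph V) (w : Sym2 V → ℕ)
    (T : Finset (Sym2 V)) (hTG : (T : Set (Sym2 V)) ⊆ G.edgeSet)
    (hacyc : (SimpleGraph.fromEdgeSet (T : Set (Sym2 V))).IsAcyclic)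
    (hspan : ∀ x y : V,
      (SimpleGraph.fromEdgeSet (T : Set (Sym2 V))).Reachable x y ↔ G.Reachable x y)
    (hmin : ∀ T' : Finset (Sym2 V), (T' : Set (Sym2 V)) ⊆ G.edgeSet →
      (SimpleGraph.fromEdgeSet (T' : Set (Sym2 V))).IsAcyclic →
      (∀ x y : V,
        (SimpleGraph.fromEdgeSet (T' : Set (Sym2 V))).Reachable x y ↔ G.Reachable x y) →
      ∑ e ∈ T, w e ≤ ∑ e ∈ T', w e)
    (a b : V) (hab : (SimpleGraph.fromEdgeSet (T : Set (Sym2 V))).Adj a b)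
    (k : ℕ) (hk : k < w s(a, b)) {x y : V}
    (hxa : ((SimpleGraph.fromEdgeSet (T : Set (Sym2 V))).deleteEdges {s(a, b)}).Reachable a x)
    (hyb : ((SimpleGraph.fromEdgeSet (T : Set (Sym2 V))).deleteEdges {s(a, b)}).Reachable b y)
    (q : (SimpleGraph.fromEdgeSet {e ∈ G.edgeSet | w e ≤ k}).Walk x y) : False := by
  classical
  set Tg := SimpleGraph.fromEdgeSet (T : Set (Sym2 V)) with hTgdef
  set D := Tg.deleteEdges {s(a, b)} with hDdef
  have habT : s(a, b) ∈ T := by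
    have h := hab
    rw [hTgdef, fromEdgeSet_adj] at h
    exact h.1
  have hbridge : ¬ D.Reachable a b :=
    isBridge_iff.mp (isAcyclic_iff_forall_adj_isBridge.mp hacyc hab)
  have hPy : ¬ D.Reachable a y := fun h => hbridge (h.trans hyb.symm)
  obtain ⟨u, v, huv, hu, hv⟩ := crossing (fun z => D.Reachable a z) q hxa hPy
  -- data of the crossing edge
  have huv' := huv
  rw [fromEdgeSet_adj] at huv'
  obtain ⟨⟨huvG, hwk⟩, huvne⟩ := huv'
  have hne : s(u, v) ≠ s(a, b) := by
    intro h
    rw [h] at hwk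
    omega
  -- v is on the b-side
  have hvb : D.Reachable b v := by
    have hGuv : G.Reachable u v := (G.mem_edgeSet.mp huvG).reachable
    obtain ⟨r⟩ := (hspan u v).mpr hGuv
    rcases side_classify r (Or.inl hu) with h | h
    · exact absurd h hv
    · exact h
  -- the crossing edge is not in T
  have hfT : s(u, v) ∉ T := by
    intro hmem
    have hDadj : D.Adj u v := by
      rw [hDdef, deleteEdges_adj]
      refine ⟨?_, by simpa using hne⟩
      rw [hTgdef, fromEdgeSet_adj]
      exact ⟨hmem, huvne⟩
    exact hv (hu.trans hDadj.reachable)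
  -- the exchanged forest
  set T' : Finset (Sym2 V) := insert s(u, v) (T.erase s(a, b)) with hT'def
  set H' := SimpleGraph.fromEdgeSet (T' : Set (Sym2 V)) with hH'def
  have hT'G : (T' : Set (Sym2 V)) ⊆ G.edgeSet := by
    intro e he
    simp only [hT'def, Finset.coe_insert, Set.mem_insert_iff, Finset.mem_coe,
      Finset.mem_erase] at he
    rcases he with rfl | ⟨_, h3⟩
    · exact huvG
    · exact hTG h3
  have hDH' : D ≤ H' := by
    intro c d hcd
    rw [hDdef, deleteEdges_adj] at hcd
    obtain ⟨hcd1, hcd2⟩ := hcd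
    rw [hTgdef, fromEdgeSet_adj] at hcd1
    rw [hH'def, fromEdgeSet_adj]
    refine ⟨?_, hcd1.2⟩
    simp only [hT'def, Finset.coe_insert, Set.mem_insert_iff, Finset.mem_coe, Finset.mem_erase]
    exact Or.inr ⟨by simpa using hcd2, hcd1.1⟩
  have hfH' : H'.Adj u v := by
    rw [hH'def, fromEdgeSet_adj]
    refine ⟨?_, huvne⟩
    simp [hT'def]
  have hab' : H'.Reachable a b :=
    ((hu.mono hDH').trans hfH'.reachable).trans ((hvb.mono hDH').symm)
  -- spanning
  have hspan' : ∀ z z' : V, H'.Reachable z z' ↔ G.Reachable z z' := by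
    intro z z'
    constructor
    · intro h
      refine h.mono ?_
      calc H' ≤ SimpleGraph.fromEdgeSet G.edgeSet := fromEdgeSet_mono hT'G
        _ = G := fromEdgeSet_edgeSet G
    · intro h
      refine reach_of_forall_adj ?_ ((hspan z z').mpr h)
      intro c d hcd
      by_cases hce : s(c, d) = s(a, b)
      · rw [Sym2.eq_iff] at hce
        rcases hce with ⟨rfl, rfl⟩ | ⟨rfl, rfl⟩
        · exact hab'
        · exact hab'.symm
      · have hDadj : D.Adj c d := by
          rw [hDdef, deleteEdges_adj]
          exact ⟨hcd, by simpa using hce⟩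
        exact (hDH' hDadj).reachable
  -- acyclicity
  have hacyc' : H'.IsAcyclic := by
    intro z c hc
    by_cases hf : s(u, v) ∈ c.edges
    · have h2 := (adj_and_reachable_delete_edges_iff_exists_cycle.mpr ⟨z, c, hc, hf⟩).2
      have hle : H' \ SimpleGraph.fromEdgeSet {s(u, v)} ≤ D := by
        intro c' d' h
        rw [sdiff_adj] at h
        obtain ⟨h1, h2'⟩ := h
        rw [hH'def, fromEdgeSet_adj] at h1
        obtain ⟨h1m, h1ne⟩ := h1
        have hne' : s(c', d') ≠ s(u, v) := by
          intro hcon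
          exact h2' (by rw [fromEdgeSet_adj]; exact ⟨by simp [hcon], h1ne⟩)
        simp only [hT'def, Finset.coe_insert, Set.mem_insert_iff, Finset.mem_coe,
          Finset.mem_erase] at h1m
        rcases h1m with hcon | ⟨hne2, hmem⟩
        · exact absurd hcon hne'
        · rw [hDdef, deleteEdges_adj]
          refine ⟨?_, by simpa using hne2⟩
          rw [hTgdef, fromEdgeSet_adj]
          exact ⟨hmem, h1ne⟩
      exact hv (hu.trans (h2.mono hle))
    · have hce : ∀ e ∈ c.edges, e ∈ Tg.edgeSet := by
        intro e he
        have h1 := c.edges_subset_edgeSet he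
        rw [hH'def, edgeSet_fromEdgeSet] at h1
        rw [hTgdef, edgeSet_fromEdgeSet]
        refine ⟨?_, h1.2⟩
        have h2 := h1.1
        simp only [hT'def, Finset.coe_insert, Set.mem_insert_iff, Finset.mem_coe,
          Finset.mem_erase] at h2
        rcases h2 with rfl | ⟨_, h3⟩
        · exact absurd he hf
        · exact h3
      exact hacyc (c.transfer Tg hce) (hc.transfer hce)
  -- weight contradiction
  have hsum := hmin T' hT'G hacyc' hspan'
  have hfnotin : s(u, v) ∉ T.erase s(a, b) := fun h => hfT (Finset.mem_of_mem_erase h)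
  rw [hT'def, Finset.sum_insert hfnotin] at hsum
  have herase := Finset.add_sum_erase T w habT
  omega

end Aux

/-- in a graph with distinct edge weights and (unique) minimum
spanning forest `T`, for `x, y` connected in `G`, the first graph of the
weight-ordered filtration in which `x` and `y` are connected is the one
obtained right after adding the edge of weight `W`, the bottleneck weight of
the `T`-path from `x` to `y`. -/
theorem stmt_2 {V : Type} [Fintype V] [DecidableEq V]
    (G : SimpleGraph V) (w : Sym2 V → ℕ) (hw : Set.InjOn w G.edgeSet)
    (T : Finset (Sym2 V)) (hTG : (T : Set (Sym2 V)) ⊆ G.edgeSet)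
    (hacyc : (SimpleGraph.fromEdgeSet (T : Set (Sym2 V))).IsAcyclic)
    (hspan : ∀ x y : V,
      (SimpleGraph.fromEdgeSet (T : Set (Sym2 V))).Reachable x y ↔ G.Reachable x y)
    (hmin : ∀ T' : Finset (Sym2 V), (T' : Set (Sym2 V)) ⊆ G.edgeSet →
      (SimpleGraph.fromEdgeSet (T' : Set (Sym2 V))).IsAcyclic →
      (∀ x y : V,
        (SimpleGraph.fromEdgeSet (T' : Set (Sym2 V))).Reachable x y ↔ G.Reachable x y) →
      ∑ e ∈ T, w e ≤ ∑ e ∈ T', w e)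
    (x y : V) (hxy : G.Reachable x y)
    (p : (SimpleGraph.fromEdgeSet (T : Set (Sym2 V))).Walk x y) (hp : p.IsPath)
    (W : ℕ) (hWmem : W ∈ p.edges.map w) (hWmax : ∀ e ∈ p.edges, w e ≤ W) :
    (SimpleGraph.fromEdgeSet {e ∈ G.edgeSet | w e ≤ W}).Reachable x y ∧
    ∀ k : ℕ, k < W →
      ¬ (SimpleGraph.fromEdgeSet {e ∈ G.edgeSet | w e ≤ k}).Reachable x y := by
  classical
  constructor
  · -- part 1: transfer the path
    refine ⟨p.transfer _ ?_⟩
    intro e he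
    have h1 : e ∈ (SimpleGraph.fromEdgeSet (T : Set (Sym2 V))).edgeSet :=
      p.edges_subset_edgeSet he
    rw [SimpleGraph.edgeSet_fromEdgeSet] at h1
    rw [SimpleGraph.edgeSet_fromEdgeSet]
    exact ⟨⟨hTG h1.1, hWmax e he⟩, h1.2⟩
  · intro k hk hreach
    obtain ⟨q⟩ := hreach
    obtain ⟨e₀, he₀p, hWe⟩ := List.mem_map.mp hWmem
    obtain ⟨a, b, rfl⟩ : ∃ a b : V, e₀ = s(a, b) := by
      induction e₀ using Sym2.ind with
      | _ a b => exact ⟨a, b, rfl⟩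
    have hab : (SimpleGraph.fromEdgeSet (T : Set (Sym2 V))).Adj a b :=
      p.adj_of_mem_edges he₀p
    have hk' : k < w s(a, b) := by rw [hWe]; exact hk
    rcases path_split p hp he₀p with ⟨hxa, hyb⟩ | ⟨hxb, hya⟩
    · exact mst_key G w T hTG hacyc hspan hmin a b hab k hk' hxa hyb q
    · have hswap : s(b, a) = s(a, b) := Sym2.eq_swap
      refine mst_key G w T hTG hacyc hspan hmin b a hab.symm k ?_ ?_ ?_ q
      · rw [hswap]; exact hk'
      · rw [hswap]; exact hxb
      · rw [hswap]; exact hya
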